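/- arXiv:1409.5726 — 3 statements merged into one kernel-verified Lean document; each statement's English description precedes it below -/
import Mathlib

section
/- Let V : ℝ → (ℝ^d →L[ℝ] ℝ^d) be continuous and bounded, with evolution operator T for ẋ = V(t)x satisfying ‖T(t,s)^{-1}‖ ≤ K·e^{−η(t−s)} for all t ≥ s, where K, η > 0. Then for any bounded linear operator H, the perturbed equation ẏ = (V(t) + H)y admits an evolution operator T̂ satisfying ‖T̂(t,s)^{-1}‖ ≤ K·e^{−(η − K‖H‖)(t−s)} for all t ≥ s. -/
/-!
Write `y(u) = T̂(u, t) x`. Variation of constants against the inverse evolution operators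
`T(r, ρ) = T(ρ, r)⁻¹` gives `y(r) = T(r, t) y(t) - ∫_r^t T(r, ρ) H y(ρ) dρ`, so by the
instability bound the weighted norm `w(r) = e^{η (t - r)} ‖y(r)‖` satisfies
`w(r) ≤ K ‖x‖ + K ‖H‖ ∫_r^t w` on `[s, t]`, and a backward Gronwall estimate gives
`w(s) ≤ K ‖x‖ e^{K ‖H‖ (t - s)}`. Differentiating `T(r, ρ)` in `ρ` needs operator-norm
derivatives of `T`, which in finite dimension follow from the pointwise ones.
-/

open Real Set

theorem hasDerivAt_of_forall_hasDerivAt_apply {𝕜 E F : Type*} [NontriviallyNormedField 𝕜]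
    [CompleteSpace 𝕜] [NormedAddCommGroup E] [NormedSpace 𝕜 E] [FiniteDimensional 𝕜 E]
    [NormedAddCommGroup F] [NormedSpace 𝕜 F] {A : 𝕜 → E →L[𝕜] F} {A' : E →L[𝕜] F} {u : 𝕜}
    (h : ∀ x, HasDerivAt (fun v => A v x) (A' x) u) : HasDerivAt A A' u := by
  let b := Module.finBasis 𝕜 E
  let coord i : StrongDual 𝕜 E := LinearMap.toContinuousLinearMap (b.coord i)
  have expand (B : E →L[𝕜] F) : B = ∑ i, (coord i).smulRight (B (b i)) := by
    ext x
    simp only [FunLike.coe_sum, Finset.sum_apply, ContinuousLinearMap.smulRight_apply, coord,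
      LinearMap.coe_toContinuousLinearMap', Module.Basis.coord_apply, ← map_smul, ← map_sum,
      b.sum_repr]
  have hsum := HasDerivAt.sum (u := Finset.univ) fun i _ =>
    (ContinuousLinearMap.smulRightL 𝕜 E F (coord i)).hasFDerivAt.comp_hasDerivAt u (h (b i))
  simp only [ContinuousLinearMap.smulRightL_apply_apply, ← expand A'] at hsum
  refine hsum.congr_of_eventuallyEq (Filter.Eventually.of_forall fun v => ?_)
  rw [Finset.sum_apply]
  exact expand (A v)

theorem le_mul_exp_of_le_add_integral {w : ℝ → ℝ} (hw : Continuous w) {C L s t : ℝ}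
    (hL : 0 ≤ L) (hst : s ≤ t) (h : ∀ r ∈ Icc s t, w r ≤ C + L * ∫ ρ in r..t, w ρ) :
    w s ≤ C * exp (L * (t - s)) := by
  set F : ℝ → ℝ := fun r => C + L * ∫ ρ in r..t, w ρ
  have hF (r : ℝ) : HasDerivAt F (-(L * w r)) r :=
    (((intervalIntegral.integral_hasDerivAt_left (hw.intervalIntegrable r t)
      (hw.stronglyMeasurableAtFilter _ _) hw.continuousAt).const_mul L).const_add C).congr_deriv
      (by ring)
  -- `r ↦ e^{L (r - t)} F r` is nondecreasing on `[s, t]` because `F' = -L w ≥ -L F` there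
  set G : ℝ → ℝ := fun r => exp (L * (r - t)) * F r
  have hG (r : ℝ) : HasDerivAt G (exp (L * (r - t)) * (L * (F r - w r))) r := by
    have he : HasDerivAt (fun r => exp (L * (r - t))) (exp (L * (r - t)) * L) r := by
      simpa using ((hasDerivAt_id r).sub_const t |>.const_mul L).exp
    exact (he.mul (hF r)).congr_deriv (by ring)
  have hmono : MonotoneOn G (Icc s t) := by
    refine monotoneOn_of_hasDerivWithinAt_nonneg (convex_Icc s t)
      (fun r _ => (hG r).continuousAt.continuousWithinAt) (fun r _ => (hG r).hasDerivWithinAt)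
      fun r hr => ?_
    rw [interior_Icc] at hr
    have hwF : 0 ≤ F r - w r := sub_nonneg.2 (h r (Ioo_subset_Icc_self hr))
    positivity
  have hFs : F s ≤ C * exp (L * (t - s)) := calc
    F s = exp (L * (t - s)) * G s := by
      simp only [G, ← mul_assoc, ← exp_add, show L * (t - s) + L * (s - t) = 0 by ring, exp_zero,
        one_mul]
    _ ≤ exp (L * (t - s)) * G t := by
      gcongr
      exact hmono (left_mem_Icc.2 hst) (right_mem_Icc.2 hst) hst
    _ = C * exp (L * (t - s)) := by simp [G, F, mul_comm]
  exact (h s (left_mem_Icc.2 hst)).trans hFs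

section Evolution

variable {E : Type*} [NormedAddCommGroup E] [NormedSpace ℝ E]

structure IsEvolutionOperator (V : ℝ → E →L[ℝ] E) (T : ℝ → ℝ → E →L[ℝ] E) : Prop where
  apply_self : ∀ t, T t t = ContinuousLinearMap.id ℝ E
  comp : ∀ t s r, (T t s).comp (T s r) = T t r
  hasDerivAt : ∀ s t x, HasDerivAt (fun u => T u s x) (V t (T t s x)) t

namespace IsEvolutionOperator

variable {V : ℝ → E →L[ℝ] E} {T : ℝ → ℝ → E →L[ℝ] E} (hT : IsEvolutionOperator V T)
include hT

theorem apply_apply (t s : ℝ) (x : E) : T t s (T s t x) = x := by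
  rw [← ContinuousLinearMap.comp_apply, hT.comp, hT.apply_self, ContinuousLinearMap.id_apply]

theorem mul_eq_one (t s : ℝ) : T t s * T s t = 1 := by
  ext x
  exact hT.apply_apply t s x

variable [FiniteDimensional ℝ E]

theorem hasDerivAt_left (s t : ℝ) : HasDerivAt (fun u => T u s) ((V t).comp (T t s)) t :=
  hasDerivAt_of_forall_hasDerivAt_apply (hT.hasDerivAt s t)

theorem hasDerivAt_right (t s : ℝ) :
    HasDerivAt (fun u => T t u) (-((T t s).comp (V s))) s := by
  let U : (E →L[ℝ] E)ˣ := ⟨T s t, T t s, hT.mul_eq_one s t, hT.mul_eq_one t s⟩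
  have hinv (u : ℝ) : Ring.inverse (T u t) = T t u :=
    Ring.inverse_unit ⟨T u t, T t u, hT.mul_eq_one u t, hT.mul_eq_one t u⟩
  have hd := (hasFDerivAt_ringInverse (𝕜 := ℝ) U).comp_hasDerivAt s (hT.hasDerivAt_left t s)
  simp only [Function.comp_def, hinv] at hd
  refine hd.congr_deriv ?_
  ext x
  simp [U, ContinuousLinearMap.mulLeftRight_apply, hT.apply_apply]

theorem continuous_right (t : ℝ) : Continuous fun u => T t u :=
  continuous_iff_continuousAt.2 fun s => (hT.hasDerivAt_right t s).continuousAt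

theorem eq_sub_integral_of_hasDerivAt {y g : ℝ → E} (hy : ∀ u, HasDerivAt y (V u (y u) + g u) u)
    (hg : Continuous g) (r t : ℝ) : y r = T r t (y t) - ∫ ρ in r..t, T r ρ (g ρ) := by
  have hderiv (u : ℝ) : HasDerivAt (fun u => T r u (y u)) (T r u (g u)) u :=
    ((hT.hasDerivAt_right r u).clm_apply (hy u)).congr_deriv (by simp)
  rw [intervalIntegral.integral_eq_sub_of_hasDerivAt (fun u _ => hderiv u)
    (((hT.continuous_right r).clm_apply hg).intervalIntegrable r t), hT.apply_self]
  simp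

variable {K η : ℝ} (hinstab : ∀ t s, s ≤ t → ‖T s t‖ ≤ K * exp (-η * (t - s))) (H : E →L[ℝ] E)
  {y : ℝ → E} (hy : ∀ u, HasDerivAt y (V u (y u) + H (y u)) u)
include hinstab hy

theorem norm_le_integral_of_hasDerivAt_add {r t : ℝ} (hrt : r ≤ t) :
    ‖y r‖ ≤ exp (-η * (t - r)) *
      (K * ‖y t‖ + K * ‖H‖ * ∫ ρ in r..t, exp (η * (t - ρ)) * ‖y ρ‖) := by
  have hy_cont : Continuous y := continuous_iff_continuousAt.2 fun u => (hy u).continuousAt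
  have hpert (ρ : ℝ) (hρ : ρ ∈ Icc r t) :
      ‖T r ρ (H (y ρ))‖ ≤ exp (-η * (t - r)) * (K * ‖H‖ * (exp (η * (t - ρ)) * ‖y ρ‖)) := calc
    ‖T r ρ (H (y ρ))‖ ≤ ‖T r ρ‖ * (‖H‖ * ‖y ρ‖) := (T r ρ).le_opNorm_of_le (H.le_opNorm _)
    _ ≤ K * exp (-η * (ρ - r)) * (‖H‖ * ‖y ρ‖) := by gcongr; exact hinstab ρ r hρ.1
    _ = exp (-η * (t - r)) * (K * ‖H‖ * (exp (η * (t - ρ)) * ‖y ρ‖)) := by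
      rw [show -η * (ρ - r) = -η * (t - r) + η * (t - ρ) by ring, exp_add]
      ring
  have hint : ‖∫ ρ in r..t, T r ρ (H (y ρ))‖
      ≤ exp (-η * (t - r)) * (K * ‖H‖ * ∫ ρ in r..t, exp (η * (t - ρ)) * ‖y ρ‖) := by
    rw [← intervalIntegral.integral_const_mul, ← intervalIntegral.integral_const_mul]
    exact intervalIntegral.norm_integral_le_of_norm_le hrt
      (MeasureTheory.ae_of_all _ fun ρ hρ => hpert ρ (Ioc_subset_Icc_self hρ))
      (Continuous.intervalIntegrable (by fun_prop) r t)
  calc ‖y r‖ = ‖T r t (y t) - ∫ ρ in r..t, T r ρ (H (y ρ))‖ := by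
        rw [← hT.eq_sub_integral_of_hasDerivAt hy (H.continuous.comp hy_cont)]
    _ ≤ K * exp (-η * (t - r)) * ‖y t‖ +
        exp (-η * (t - r)) * (K * ‖H‖ * ∫ ρ in r..t, exp (η * (t - ρ)) * ‖y ρ‖) :=
      (norm_sub_le _ _).trans (add_le_add ((T r t).le_opNorm_of_le le_rfl |>.trans
        (by gcongr; exact hinstab t r hrt)) hint)
    _ = _ := by ring

theorem norm_le_of_hasDerivAt_add {s t : ℝ} (hst : s ≤ t) :
    ‖y s‖ ≤ K * exp (-(η - K * ‖H‖) * (t - s)) * ‖y t‖ := by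
  have hK : 0 ≤ K := by simpa using (norm_nonneg _).trans (hinstab t t le_rfl)
  have hy_cont : Continuous y := continuous_iff_continuousAt.2 fun u => (hy u).continuousAt
  set w : ℝ → ℝ := fun r => exp (η * (t - r)) * ‖y r‖
  have hw (r : ℝ) (hr : r ∈ Icc s t) : w r ≤ K * ‖y t‖ + K * ‖H‖ * ∫ ρ in r..t, w ρ := calc
    w r ≤ exp (η * (t - r)) * (exp (-η * (t - r)) *
        (K * ‖y t‖ + K * ‖H‖ * ∫ ρ in r..t, w ρ)) :=
      mul_le_mul_of_nonneg_left (hT.norm_le_integral_of_hasDerivAt_add hinstab H hy hr.2)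
        (exp_nonneg _)
    _ = K * ‖y t‖ + K * ‖H‖ * ∫ ρ in r..t, w ρ := by
      rw [← mul_assoc, ← exp_add, show η * (t - r) + -η * (t - r) = 0 by ring, exp_zero, one_mul]
  calc ‖y s‖ = exp (-η * (t - s)) * w s := by
        simp only [w, ← mul_assoc, ← exp_add, show -η * (t - s) + η * (t - s) = 0 by ring,
          exp_zero, one_mul]
    _ ≤ exp (-η * (t - s)) * (K * ‖y t‖ * exp (K * ‖H‖ * (t - s))) := by
        gcongr
        exact le_mul_exp_of_le_add_integral (by fun_prop) (by positivity) hst hw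
    _ = K * exp (-(η - K * ‖H‖) * (t - s)) * ‖y t‖ := by
        rw [show -(η - K * ‖H‖) * (t - s) = -η * (t - s) + K * ‖H‖ * (t - s) by ring, exp_add]
        ring

end IsEvolutionOperator

end Evolution

theorem stmt1_general (d : ℕ)
    (V : ℝ → (EuclideanSpace ℝ (Fin d) →L[ℝ] EuclideanSpace ℝ (Fin d)))
    (H : EuclideanSpace ℝ (Fin d) →L[ℝ] EuclideanSpace ℝ (Fin d))
    (K η : ℝ) (hK : 0 < K)
    (T That : ℝ → ℝ → (EuclideanSpace ℝ (Fin d) →L[ℝ] EuclideanSpace ℝ (Fin d)))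
    -- `T` is the evolution operator of `ẋ = V(t)x`
    (hTid : ∀ t : ℝ, T t t = ContinuousLinearMap.id ℝ _)
    (hTcoc : ∀ t s r : ℝ, (T t s).comp (T s r) = T t r)
    (hTode : ∀ (s t : ℝ) (x : EuclideanSpace ℝ (Fin d)),
      HasDerivAt (fun u => T u s x) (V t (T t s x)) t)
    -- instability: `‖T(t,s)⁻¹‖ = ‖T s t‖ ≤ K e^{−η(t−s)}`
    (hinstab : ∀ t s : ℝ, s ≤ t → ‖T s t‖ ≤ K * Real.exp (-η * (t - s)))
    -- `T̂` is the evolution operator of `ẏ = (V(t)+H)y`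
    (hThid : ∀ t : ℝ, That t t = ContinuousLinearMap.id ℝ _)
    (hThode : ∀ (s t : ℝ) (x : EuclideanSpace ℝ (Fin d)),
      HasDerivAt (fun u => That u s x) (V t (That t s x) + H (That t s x)) t) :
    ∀ t s : ℝ, s ≤ t → ‖That s t‖ ≤ K * Real.exp (-(η - K * ‖H‖) * (t - s)) := by
  intro t s hst
  have hT : IsEvolutionOperator V T := ⟨hTid, hTcoc, hTode⟩
  refine ContinuousLinearMap.opNorm_le_bound _ (by positivity) fun x => ?_
  simpa [hThid] using
    hT.norm_le_of_hasDerivAt_add hinstab H (y := fun u => That u t x) (fun u => hThode t u x) hst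

/-- If the evolution operator `T` of `ẋ = V(t)x` satisfies
`‖T(t,s)⁻¹‖ ≤ K e^{−η(t−s)}` for `t ≥ s` (here `T(t,s)⁻¹ = T s t` by the cocycle
property), then the evolution operator `T̂` of the perturbed equation
`ẏ = (V(t)+H)y` satisfies `‖T̂(t,s)⁻¹‖ ≤ K e^{−(η−K‖H‖)(t−s)}` for all `t ≥ s`. -/
theorem stmt1 (d : ℕ) (hd : 1 ≤ d)
    (V : ℝ → (EuclideanSpace ℝ (Fin d) →L[ℝ] EuclideanSpace ℝ (Fin d)))
    (hVc : Continuous V) (MV : ℝ) (hVb : ∀ t : ℝ, ‖V t‖ ≤ MV)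
    (H : EuclideanSpace ℝ (Fin d) →L[ℝ] EuclideanSpace ℝ (Fin d))
    (K η : ℝ) (hK : 0 < K) (hη : 0 < η)
    (T That : ℝ → ℝ → (EuclideanSpace ℝ (Fin d) →L[ℝ] EuclideanSpace ℝ (Fin d)))
    -- `T` is the evolution operator of `ẋ = V(t)x`
    (hTid : ∀ t : ℝ, T t t = ContinuousLinearMap.id ℝ _)
    (hTcoc : ∀ t s r : ℝ, (T t s).comp (T s r) = T t r)
    (hTode : ∀ (s t : ℝ) (x : EuclideanSpace ℝ (Fin d)),
      HasDerivAt (fun u => T u s x) (V t (T t s x)) t)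
    -- instability: `‖T(t,s)⁻¹‖ = ‖T s t‖ ≤ K e^{−η(t−s)}`
    (hinstab : ∀ t s : ℝ, s ≤ t → ‖T s t‖ ≤ K * Real.exp (-η * (t - s)))
    -- `T̂` is the evolution operator of `ẏ = (V(t)+H)y`
    (hThid : ∀ t : ℝ, That t t = ContinuousLinearMap.id ℝ _)
    (hThcoc : ∀ t s r : ℝ, (That t s).comp (That s r) = That t r)
    (hThode : ∀ (s t : ℝ) (x : EuclideanSpace ℝ (Fin d)),
      HasDerivAt (fun u => That u s x) (V t (That t s x) + H (That t s x)) t) :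
    ∀ t s : ℝ, s ≤ t → ‖That s t‖ ≤ K * Real.exp (-(η - K * ‖H‖) * (t - s)) :=
  stmt1_general d V H K η hK T That hTid hTcoc hTode hinstab hThid hThode
end

section
/- Let w₁ ≥ w₂ ≥ ⋯ ≥ w_n > 0 be expected degrees satisfying the strong heterogeneity hypotheses with parameters (ℓ, θ, γ), where θ < δ/2 and γ > 1 − δ/2 for some δ ∈ [3/4, 3−√5), together with (max_k w_k)² ≤ Σ_k w_k, ℓ(n) < Γ₀(max_k w_k)^θ, and Γ₁(log n)^{1+β} < w_i < Γ₂(max_k w_k)^{1−γ} for all i > ℓ(n). Then for all sufficiently large n, the second-order average degree Δ := (Σ_k w_k²)/(Σ_k w_k) satisfies Δ < (max_k w_k)^δ. -/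
open Finset

/-- under the strong heterogeneity hypotheses (with hubs counted by `ℓ`,
parameters `θ < δ/2`, `γ > 1 − δ/2`, `δ ∈ [3/4, 3−√5)`), the second-order average
degree satisfies `Δ < (max_k w_k)^δ` for all sufficiently large `n`. Here `w n i`,
`i ∈ {1,…,n}`, is the expected degree sequence (nonincreasing, so `w n 1` is the max). -/
theorem stmt4 (δ θ γ β Γ₀ Γ₁ Γ₂ c₀ : ℝ)
    (hδ1 : (3:ℝ)/4 ≤ δ) (hδ2 : δ < 3 - Real.sqrt 5)
    (hθpos : 0 < θ) (hθ : θ < δ / 2)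
    (hγ : γ > 1 - δ / 2) (hγ1 : γ < 1)
    (hβ : 0 < β) (hΓ₀ : 0 < Γ₀) (hΓ₁ : 0 < Γ₁) (hΓ₂ : 0 < Γ₂)
    (hc₀ : 0 < c₀) (hc₀' : c₀ ≤ 1/2)
    (w : ℕ → ℕ → ℝ) (ℓ : ℕ → ℕ)
    -- positivity and monotonicity: `w n 1 ≥ w n 2 ≥ ⋯ ≥ w n n > 0`
    (hpos : ∀ n : ℕ, 1 ≤ n → ∀ i ∈ Icc 1 n, 0 < w n i)
    (hmono : ∀ n i j : ℕ, 1 ≤ i → i ≤ j → j ≤ n → w n j ≤ w n i)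
    -- admissibility: `(max_k w_k)² ≤ Σ_k w_k`
    (hadm : ∀ n : ℕ, 1 ≤ n → (w n 1) ^ 2 ≤ ∑ k ∈ Icc 1 n, w n k)
    -- [H0] cardinality of hubs
    (hH0 : ∀ n : ℕ, 1 ≤ n → (ℓ n : ℝ) < Γ₀ * (w n 1) ^ θ)
    -- [H1] massively connected hubs
    (hH1 : 2 * c₀ ≤ Filter.liminf (fun n => w n (ℓ n) / w n 1) Filter.atTop)
    -- [H2] poorly connected nodes
    (hH2 : ∀ n i : ℕ, ℓ n < i → i ≤ n →
      Γ₁ * (Real.log (n : ℝ)) ^ ((1:ℝ) + β) < w n i ∧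
      w n i < Γ₂ * (w n 1) ^ ((1:ℝ) - γ)) :
    ∃ N : ℕ, ∀ n > N,
      (∑ k ∈ Icc 1 n, (w n k) ^ 2) / (∑ k ∈ Icc 1 n, w n k) < (w n 1) ^ δ := by
  have hδpos : 0 < δ := by linarith
  -- Step 1: the maximum degree tends to infinity
  have hM : ∀ C : ℝ, ∀ᶠ n : ℕ in Filter.atTop, C < w n 1 := by
    intro C
    have hlog : Filter.Tendsto (fun n : ℕ => Γ₁ * (Real.log (n : ℝ)) ^ ((1:ℝ) + β))
        Filter.atTop Filter.atTop := by
      apply Filter.Tendsto.const_mul_atTop hΓ₁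
      exact (tendsto_rpow_atTop (by linarith)).comp
        (Real.tendsto_log_atTop.comp tendsto_natCast_atTop_atTop)
    have h1 := hlog.eventually_gt_atTop (max C 0)
    have h2 := Filter.eventually_ge_atTop (⌈Γ₀ * (max C 0) ^ θ⌉₊)
    have h3 := Filter.eventually_ge_atTop 1
    filter_upwards [h1, h2, h3] with n h1n h2n h3n
    refine lt_of_le_of_lt (le_max_left C 0) ?_
    by_cases hln : ℓ n < n
    · have hwnn := (hH2 n n hln le_rfl).1
      have := hmono n 1 n le_rfl h3n le_rfl
      linarith
    · -- n ≤ ℓ n, so the max must be huge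
      have hn : (n : ℝ) ≤ (ℓ n : ℝ) := by exact_mod_cast le_of_not_gt hln
      have hceil : Γ₀ * (max C 0) ^ θ ≤ (n : ℝ) := by
        exact le_trans (Nat.le_ceil _) (by exact_mod_cast h2n)
      have h0 := hH0 n h3n
      have hpow : (max C 0) ^ θ < (w n 1) ^ θ := by
        have : Γ₀ * (max C 0) ^ θ < Γ₀ * (w n 1) ^ θ := by linarith
        exact lt_of_mul_lt_mul_left this hΓ₀.le
      by_contra hle
      push_neg at hle
      have := Real.rpow_le_rpow (hpos n h3n 1 (by simp [h3n])).le hle hθpos.le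
      linarith
  -- Step 2: choose a threshold where Γ₀ M^(θ-δ) + Γ₂ M^(1-γ-δ) < 1
  have hf : Filter.Tendsto (fun M : ℝ => Γ₀ * M ^ (θ - δ) + Γ₂ * M ^ ((1:ℝ) - γ - δ))
      Filter.atTop (nhds 0) := by
    have t1 : Filter.Tendsto (fun M : ℝ => Γ₀ * M ^ (θ - δ)) Filter.atTop (nhds 0) := by
      have := (tendsto_rpow_neg_atTop (y := δ - θ) (by linarith)).const_mul Γ₀
      simpa [neg_sub] using this
    have t2 : Filter.Tendsto (fun M : ℝ => Γ₂ * M ^ ((1:ℝ) - γ - δ)) Filter.atTop (nhds 0) := by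
      have := (tendsto_rpow_neg_atTop (y := γ + δ - 1) (by linarith)).const_mul Γ₂
      have heq : ∀ M : ℝ, -(γ + δ - 1) = (1:ℝ) - γ - δ := by intro M; ring
      simpa [heq 0] using this
    simpa using t1.add t2
  obtain ⟨C, hC⟩ := Filter.eventually_atTop.mp
    (hf.eventually_lt_const one_pos)
  -- Step 3: combine
  obtain ⟨N, hN⟩ := Filter.eventually_atTop.mp
    ((hM (max C 1)).and (Filter.eventually_ge_atTop 1))
  refine ⟨N, fun n hn => ?_⟩
  obtain ⟨hMn, hn1⟩ := hN n hn.le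
  set M := w n 1 with hMdef
  have hM1 : (1:ℝ) < M := lt_of_le_of_lt (le_max_right C 1) hMn
  have hMC : C ≤ M := le_of_lt (lt_of_le_of_lt (le_max_left C 1) hMn)
  have hMpos : (0:ℝ) < M := by linarith
  set S := ∑ k ∈ Icc 1 n, w n k with hSdef
  set Q := ∑ k ∈ Icc 1 n, (w n k) ^ 2 with hQdef
  have hS : M ^ 2 ≤ S := hadm n hn1
  have hSpos : 0 < S := lt_of_lt_of_le (by positivity) hS
  -- bound on Q
  have hQbound : Q < Γ₀ * M ^ θ * M ^ 2 + Γ₂ * M ^ ((1:ℝ) - γ) * S := by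
    have step1 : Q ≤ ∑ i ∈ Icc 1 n,
        (if i ≤ ℓ n then M ^ 2 else Γ₂ * M ^ ((1:ℝ) - γ) * w n i) := by
      apply Finset.sum_le_sum
      intro i hi
      obtain ⟨hi1, hin⟩ := Finset.mem_Icc.mp hi
      have hwi : 0 < w n i := hpos n hn1 i hi
      have hwiM : w n i ≤ M := hmono n 1 i le_rfl hi1 hin
      by_cases h : i ≤ ℓ n
      · simp only [h, if_true]
        exact pow_le_pow_left₀ hwi.le hwiM 2
      · simp only [h, if_false]
        have := (hH2 n i (lt_of_not_ge h) hin).2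
        calc (w n i) ^ 2 = w n i * w n i := sq (w n i)
          _ ≤ (Γ₂ * M ^ ((1:ℝ) - γ)) * w n i := mul_le_mul_of_nonneg_right this.le hwi.le
          _ = Γ₂ * M ^ ((1:ℝ) - γ) * w n i := by ring
    have step2 : ∑ i ∈ Icc 1 n, (if i ≤ ℓ n then M ^ 2 else Γ₂ * M ^ ((1:ℝ) - γ) * w n i)
        ≤ (ℓ n : ℝ) * M ^ 2 + Γ₂ * M ^ ((1:ℝ) - γ) * S := by
      rw [Finset.sum_ite]
      gcongr ?_ + ?_
      · rw [Finset.sum_const, nsmul_eq_mul]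
        have hcard : ((Icc 1 n).filter (fun i => i ≤ ℓ n)).card ≤ ℓ n := by
          have hsub : (Icc 1 n).filter (fun i => i ≤ ℓ n) ⊆ Icc 1 (ℓ n) := by
            intro i hi
            obtain ⟨hi1, hi2⟩ := Finset.mem_filter.mp hi
            exact Finset.mem_Icc.mpr ⟨(Finset.mem_Icc.mp hi1).1, hi2⟩
          calc ((Icc 1 n).filter (fun i => i ≤ ℓ n)).card ≤ (Icc 1 (ℓ n)).card :=
                Finset.card_le_card hsub
            _ = ℓ n := by rw [Nat.card_Icc]; omega
        have : (((Icc 1 n).filter (fun i => i ≤ ℓ n)).card : ℝ) ≤ (ℓ n : ℝ) := by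
          exact_mod_cast hcard
        nlinarith [sq_nonneg M, hM1]
      · rw [← Finset.mul_sum]
        have hsum : ∑ i ∈ (Icc 1 n).filter (fun i => ¬ i ≤ ℓ n), w n i ≤ S := by
          apply Finset.sum_le_sum_of_subset_of_nonneg (Finset.filter_subset _ _)
          intro i hi _
          exact (hpos n hn1 i hi).le
        have hc : (0:ℝ) ≤ Γ₂ * M ^ ((1:ℝ) - γ) := by positivity
        exact mul_le_mul_of_nonneg_left hsum hc
    have step3 : (ℓ n : ℝ) * M ^ 2 < Γ₀ * M ^ θ * M ^ 2 :=
      mul_lt_mul_of_pos_right (hH0 n hn1) (by positivity)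
    calc Q ≤ _ := step1
      _ ≤ (ℓ n : ℝ) * M ^ 2 + Γ₂ * M ^ ((1:ℝ) - γ) * S := step2
      _ < Γ₀ * M ^ θ * M ^ 2 + Γ₂ * M ^ ((1:ℝ) - γ) * S := by linarith
  -- final bound
  have hfC : Γ₀ * M ^ (θ - δ) + Γ₂ * M ^ ((1:ℝ) - γ - δ) < 1 := hC M hMC
  have e1 : M ^ (θ - δ) * M ^ δ = M ^ θ := by
    rw [← Real.rpow_add hMpos]; ring_nf
  have e2 : M ^ ((1:ℝ) - γ - δ) * M ^ δ = M ^ ((1:ℝ) - γ) := by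
    rw [← Real.rpow_add hMpos]; ring_nf
  have hδM : (0:ℝ) < M ^ δ := Real.rpow_pos_of_pos hMpos δ
  have hT : Γ₀ * M ^ θ + Γ₂ * M ^ ((1:ℝ) - γ) < M ^ δ := by
    have := mul_lt_mul_of_pos_right hfC hδM
    rw [add_mul, one_mul, mul_assoc, mul_assoc, e1, e2] at this
    exact this
  rw [div_lt_iff₀ hSpos]
  have hθM : (0:ℝ) ≤ Γ₀ * M ^ θ := by positivity
  have hMS : Γ₀ * M ^ θ * M ^ 2 ≤ Γ₀ * M ^ θ * S := mul_le_mul_of_nonneg_left hS hθM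
  calc Q < Γ₀ * M ^ θ * M ^ 2 + Γ₂ * M ^ ((1:ℝ) - γ) * S := hQbound
    _ ≤ Γ₀ * M ^ θ * S + Γ₂ * M ^ ((1:ℝ) - γ) * S := by linarith
    _ = (Γ₀ * M ^ θ + Γ₂ * M ^ ((1:ℝ) - γ)) * S := by ring
    _ < M ^ δ * S := mul_lt_mul_of_pos_right hT hSpos
end

section
/- Under the strong heterogeneity hypotheses with θ < δ/2 and γ > 1 − δ/2 for some δ ∈ [3/4, 3−√5), for all sufficiently large n, with probability at least 1 − n^{−1/2}, the largest adjacency eigenvalue of a random graph in G_{ℓ,θ,γ}(w) satisfies λ_max ≤ 5(max_{1≤k≤n} w_k)^δ. -/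
/-!
On the event that every vertex `i` has degree below `2 w_i + (3/2) log n`, the adjacency matrix
has fewer than `h = Γ₀ W^θ` hub rows (`W = max w`), each of sum at most `3W`, while every other
row has sum at most `W^δ`: by [H2] the remaining weights are `O(W^{1-γ})` and `log n` is
`o(W^δ)`. Weighting the hubs in the Collatz–Wielandt bound gives
`λ ≤ max h W^δ + √(3hW) ≤ 2 W^δ` as soon as `θ + 1 < 2δ` and `W` is large, and `W → ∞` by
[H0] and [H2]. A multiplicative Chernoff bound `exp(2 E[d_i] - a)` for the degree `d_i`, with
`E[d_i] ≤ w_i`, shows that each vertex violates its degree bound with probability at most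
`n^{-3/2}`, so the event fails with probability at most `n^{-1/2}`.
-/

open Finset MeasureTheory ProbabilityTheory
open Filter Asymptotics Matrix

section Chernoff

variable {Ω : Type*} [MeasurableSpace Ω] {μ : Measure Ω}

theorem mgf_one_le_of_zero_or_one [IsProbabilityMeasure μ] {Y : Ω → ℝ} (hY : Measurable Y)
    (h01 : ∀ ω, Y ω = 0 ∨ Y ω = 1) :
    mgf Y μ 1 ≤ Real.exp (2 * μ.real {ω | Y ω = 1}) := by
  have hs : MeasurableSet {ω | Y ω = 1} := hY (measurableSet_singleton 1)
  have hexp : (fun ω => Real.exp (1 * Y ω))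
      = fun ω => 1 + (Real.exp 1 - 1) * {ω | Y ω = 1}.indicator 1 ω := by
    funext ω
    rcases h01 ω with h | h <;> simp [h]
  have he : Real.exp 1 - 1 ≤ 2 := by linarith [Real.exp_one_lt_d9]
  calc mgf Y μ 1 = 1 + (Real.exp 1 - 1) * μ.real {ω | Y ω = 1} := by
        rw [mgf, hexp, integral_add (integrable_const 1)
          (((integrable_const 1).indicator hs).const_mul _), integral_const_mul,
          integral_indicator_one hs]
        simp
    _ ≤ 1 + 2 * μ.real {ω | Y ω = 1} := by gcongr
    _ ≤ Real.exp (2 * μ.real {ω | Y ω = 1}) := by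
        linarith [Real.add_one_le_exp (2 * μ.real {ω | Y ω = 1})]

theorem measure_sum_ge_le_exp_of_zero_or_one {ι : Type*} {Y : ι → Ω → ℝ}
    (hmeas : ∀ i, Measurable (Y i)) (h01 : ∀ i ω, Y i ω = 0 ∨ Y i ω = 1)
    (hindep : iIndepFun Y μ) (s : Finset ι) (a : ℝ) :
    μ {ω | a ≤ ∑ i ∈ s, Y i ω}
      ≤ ENNReal.ofReal (Real.exp (2 * ∑ i ∈ s, μ.real {ω | Y i ω = 1} - a)) := by
  have := hindep.isProbabilityMeasure
  have hle : ∀ i ω, Y i ω ≤ 1 := fun i ω => by rcases h01 i ω with h | h <;> simp [h]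
  have hint : Integrable (fun ω => Real.exp (1 * (∑ i ∈ s, Y i) ω)) μ :=
    hindep.integrable_exp_mul_sum hmeas fun i _ =>
      integrable_exp_mul_of_le 1 1 zero_le_one (hmeas i).aemeasurable (ae_of_all _ (hle i))
  have hmgf : mgf (∑ i ∈ s, Y i) μ 1 ≤ Real.exp (2 * ∑ i ∈ s, μ.real {ω | Y i ω = 1}) := by
    rw [hindep.mgf_sum hmeas, Finset.mul_sum, Real.exp_sum]
    exact Finset.prod_le_prod (fun i _ => mgf_nonneg)
      fun i _ => mgf_one_le_of_zero_or_one (hmeas i) (h01 i)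
  rw [← ofReal_measureReal]
  refine ENNReal.ofReal_le_ofReal ?_
  calc μ.real {ω | a ≤ ∑ i ∈ s, Y i ω} = μ.real {ω | a ≤ (∑ i ∈ s, Y i) ω} := by
        simp only [Finset.sum_apply]
    _ ≤ Real.exp (-1 * a) * mgf (∑ i ∈ s, Y i) μ 1 := measure_ge_le_exp_mul_mgf a zero_le_one hint
    _ ≤ Real.exp (-1 * a) * Real.exp (2 * ∑ i ∈ s, μ.real {ω | Y i ω = 1}) := by gcongr
    _ = _ := by rw [← Real.exp_add]; ring_nf

theorem ofReal_one_sub_le_measure [IsProbabilityMeasure μ] {s : Set Ω} {ε : ℝ} (hε : 0 ≤ ε)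
    (h : μ sᶜ ≤ ENNReal.ofReal ε) : ENNReal.ofReal (1 - ε) ≤ μ s := by
  have hcover : 1 ≤ μ s + μ sᶜ := by
    simpa [measure_univ] using measure_union_le (μ := μ) s sᶜ
  rw [ENNReal.ofReal_sub _ hε, ENNReal.ofReal_one]
  exact tsub_le_iff_right.2 (hcover.trans (add_le_add_right h _))

end Chernoff

section EdgeIndicators

def incidentEdges (n i : ℕ) : Finset {p : ℕ × ℕ // 1 ≤ p.1 ∧ p.1 < p.2 ∧ p.2 ≤ n} :=
  (((Icc 1 n).erase i).image fun j => (min i j, max i j)).subtype _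

theorem sum_incidentEdges {M : Type*} [AddCommMonoid M] {n i : ℕ} (hi : i ∈ Icc 1 n)
    (F : ℕ → ℕ → M) (hF : ∀ j, F j i = F i j) :
    ∑ p ∈ incidentEdges n i, F p.1.1 p.1.2 = ∑ j ∈ (Icc 1 n).erase i, F i j := by
  rw [Finset.mem_Icc] at hi
  rw [incidentEdges, Finset.sum_subtype_of_mem (fun p : ℕ × ℕ => F p.1 p.2), Finset.sum_image]
  · refine Finset.sum_congr rfl fun j _ => ?_
    rcases le_total i j with h | h
    · simp [min_eq_left h, max_eq_right h]
    · simp [min_eq_right h, max_eq_left h, hF]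
  · intro j _ k _ hjk
    simp only [Prod.mk.injEq] at hjk
    omega
  · simp only [Finset.mem_image, Finset.mem_erase, Finset.mem_Icc]
    rintro _ ⟨j, hj, rfl⟩
    omega

variable {Ω : Type*} [MeasurableSpace Ω] {μ : Measure Ω} {n : ℕ} {X : ℕ → ℕ → Ω → ℝ}

theorem measure_degree_ge_le_exp (hmeas : ∀ i j, Measurable (X i j))
    (hsymm : ∀ i j, X i j = X j i) (h01 : ∀ i j ω, X i j ω = 0 ∨ X i j ω = 1)
    (hindep : iIndepFun (fun (p : {p : ℕ × ℕ // 1 ≤ p.1 ∧ p.1 < p.2 ∧ p.2 ≤ n}) ω =>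
      X p.val.1 p.val.2 ω) μ) {i : ℕ} (hi : i ∈ Icc 1 n) (a : ℝ) :
    μ {ω | a ≤ ∑ j ∈ (Icc 1 n).erase i, X i j ω} ≤ ENNReal.ofReal
      (Real.exp (2 * ∑ j ∈ (Icc 1 n).erase i, μ.real {ω | X i j ω = 1} - a)) := by
  have hdeg : ∀ ω, ∑ p ∈ incidentEdges n i, X p.1.1 p.1.2 ω = ∑ j ∈ (Icc 1 n).erase i, X i j ω :=
    fun ω => sum_incidentEdges hi (fun j k => X j k ω) fun j => by rw [hsymm]
  have hprob := sum_incidentEdges hi (fun j k => μ.real {ω | X j k ω = 1}) fun j => by rw [hsymm]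
  have := measure_sum_ge_le_exp_of_zero_or_one (fun p => hmeas _ _) (fun p => h01 _ _) hindep
    (incidentEdges n i) a
  simp only [hdeg] at this
  rwa [hprob] at this

variable {w : ℕ → ℝ}

theorem sum_measureReal_edge_le (hw : ∀ i ∈ Icc 1 n, 0 ≤ w i)
    (hber : ∀ i ∈ Icc 1 n, ∀ j ∈ Icc 1 n, i ≠ j →
      μ {ω | X i j ω = 1} = ENNReal.ofReal (w i * w j / ∑ k ∈ Icc 1 n, w k))
    {i : ℕ} (hi : i ∈ Icc 1 n) :
    ∑ j ∈ (Icc 1 n).erase i, μ.real {ω | X i j ω = 1} ≤ w i := by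
  have htotal : 0 ≤ ∑ k ∈ Icc 1 n, w k := Finset.sum_nonneg hw
  have hsum : ∑ j ∈ (Icc 1 n).erase i, w j ≤ ∑ k ∈ Icc 1 n, w k :=
    Finset.sum_le_sum_of_subset_of_nonneg (Finset.erase_subset _ _) fun j hj _ => hw j hj
  calc ∑ j ∈ (Icc 1 n).erase i, μ.real {ω | X i j ω = 1}
      = w i * ((∑ j ∈ (Icc 1 n).erase i, w j) / ∑ k ∈ Icc 1 n, w k) := by
        rw [Finset.sum_div, Finset.mul_sum]
        refine Finset.sum_congr rfl fun j hj => ?_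
        obtain ⟨hji, hj⟩ := Finset.mem_erase.1 hj
        rw [measureReal_def, hber i hi j hj hji.symm, ENNReal.toReal_ofReal, mul_div_assoc]
        exact div_nonneg (mul_nonneg (hw i hi) (hw j hj)) htotal
    _ ≤ w i * 1 := by gcongr; exacts [hw i hi, div_le_one_of_le₀ hsum htotal]
    _ = w i := mul_one _

theorem measure_degree_ge_le_rpow (hw : ∀ i ∈ Icc 1 n, 0 ≤ w i)
    (hmeas : ∀ i j, Measurable (X i j)) (hsymm : ∀ i j, X i j = X j i)
    (hdiag : ∀ i ω, X i i ω = 0) (h01 : ∀ i j ω, X i j ω = 0 ∨ X i j ω = 1)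
    (hber : ∀ i ∈ Icc 1 n, ∀ j ∈ Icc 1 n, i ≠ j →
      μ {ω | X i j ω = 1} = ENNReal.ofReal (w i * w j / ∑ k ∈ Icc 1 n, w k))
    (hindep : iIndepFun (fun (p : {p : ℕ × ℕ // 1 ≤ p.1 ∧ p.1 < p.2 ∧ p.2 ≤ n}) ω =>
      X p.val.1 p.val.2 ω) μ) {i : ℕ} (hi : i ∈ Icc 1 n) :
    μ {ω | 2 * w i + 3/2 * Real.log n ≤ ∑ j ∈ Icc 1 n, X i j ω}
      ≤ ENNReal.ofReal ((n : ℝ) ^ (-(3/2 : ℝ))) := by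
  have hnpos : (0 : ℝ) < n := Nat.cast_pos.2 (by have := Finset.mem_Icc.1 hi; omega)
  have hloop : ∀ ω, ∑ j ∈ (Icc 1 n).erase i, X i j ω = ∑ j ∈ Icc 1 n, X i j ω :=
    fun ω => Finset.sum_erase _ (hdiag i ω)
  simp only [← hloop]
  refine (measure_degree_ge_le_exp hmeas hsymm h01 hindep hi _).trans
    (ENNReal.ofReal_le_ofReal ?_)
  rw [Real.rpow_def_of_pos hnpos]
  gcongr
  linarith [sum_measureReal_edge_le hw hber hi]

theorem ofReal_one_sub_le_measure_degree_lt (hw : ∀ i ∈ Icc 1 n, 0 ≤ w i)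
    (hmeas : ∀ i j, Measurable (X i j)) (hsymm : ∀ i j, X i j = X j i)
    (hdiag : ∀ i ω, X i i ω = 0) (h01 : ∀ i j ω, X i j ω = 0 ∨ X i j ω = 1)
    (hber : ∀ i ∈ Icc 1 n, ∀ j ∈ Icc 1 n, i ≠ j →
      μ {ω | X i j ω = 1} = ENNReal.ofReal (w i * w j / ∑ k ∈ Icc 1 n, w k))
    (hindep : iIndepFun (fun (p : {p : ℕ × ℕ // 1 ≤ p.1 ∧ p.1 < p.2 ∧ p.2 ≤ n}) ω =>
      X p.val.1 p.val.2 ω) μ) :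
    ENNReal.ofReal (1 - (n : ℝ) ^ (-(1/2 : ℝ))) ≤
      μ {ω | ∀ i ∈ Icc 1 n, ∑ j ∈ Icc 1 n, X i j ω < 2 * w i + 3/2 * Real.log n} := by
  have := hindep.isProbabilityMeasure
  refine ofReal_one_sub_le_measure (by positivity) ?_
  calc μ {ω | ∀ i ∈ Icc 1 n, ∑ j ∈ Icc 1 n, X i j ω < 2 * w i + 3/2 * Real.log n}ᶜ
      ≤ μ (⋃ i ∈ Icc 1 n, {ω | 2 * w i + 3/2 * Real.log n ≤ ∑ j ∈ Icc 1 n, X i j ω}) := by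
        refine measure_mono fun ω hω => ?_
        simpa [and_assoc] using hω
    _ ≤ ∑ i ∈ Icc 1 n, μ {ω | 2 * w i + 3/2 * Real.log n ≤ ∑ j ∈ Icc 1 n, X i j ω} :=
        measure_biUnion_finset_le _ _
    _ ≤ ∑ _i ∈ Icc 1 n, ENNReal.ofReal ((n : ℝ) ^ (-(3/2 : ℝ))) :=
        Finset.sum_le_sum fun i hi =>
          measure_degree_ge_le_rpow hw hmeas hsymm hdiag h01 hber hindep hi
    _ = ENNReal.ofReal ((n : ℝ) ^ (-(1/2 : ℝ))) := by
        rw [Finset.sum_const, Nat.card_Icc, nsmul_eq_mul, add_tsub_cancel_right,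
          ← ENNReal.ofReal_natCast, ← ENNReal.ofReal_mul n.cast_nonneg]
        congr 1
        rw [show (-(1/2) : ℝ) = 1 + -(3/2) by norm_num, Real.rpow_add' n.cast_nonneg (by norm_num),
          Real.rpow_one]

end EdgeIndicators

namespace Matrix

variable {ι : Type*} [Fintype ι] {A : Matrix ι ι ℝ} {lam : ℝ} {v : ι → ℝ}

theorem abs_le_of_mulVec_le_smul (hA : ∀ i j, 0 ≤ A i j) {x : ι → ℝ} (hx : ∀ i, 0 < x i)
    {c : ℝ} (hAx : ∀ i, (A *ᵥ x) i ≤ c * x i) (hv : v ≠ 0) (heig : A *ᵥ v = lam • v) :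
    |lam| ≤ c := by
  obtain ⟨j, hj⟩ := Function.ne_iff.1 hv
  have : Nonempty ι := ⟨j⟩
  obtain ⟨k, hk⟩ := Finite.exists_max fun i => |v i| / x i
  set t := |v k| / x k
  have hvk : 0 < |v k| := by
    have : 0 < |v j| / x j := div_pos (abs_pos.2 hj) (hx j)
    exact (div_pos_iff_of_pos_right (hx k)).1 (this.trans_le (hk j))
  have hvt : ∀ i, |v i| ≤ t * x i := fun i => (div_le_iff₀ (hx i)).1 (hk i)
  refine le_of_mul_le_mul_right ?_ hvk
  calc |lam| * |v k| = |∑ i, A k i * v i| := by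
        rw [← abs_mul, ← smul_eq_mul, ← Pi.smul_apply, ← heig]; rfl
    _ ≤ ∑ i, A k i * (t * x i) := by
        refine (Finset.abs_sum_le_sum_abs _ _).trans (Finset.sum_le_sum fun i _ => ?_)
        rw [abs_mul, abs_of_nonneg (hA k i)]
        exact mul_le_mul_of_nonneg_left (hvt i) (hA k i)
    _ = t * (A *ᵥ x) k := by
        simp only [mulVec, dotProduct, Finset.mul_sum]
        exact Finset.sum_congr rfl fun i _ => by ring
    _ ≤ t * (c * x k) := mul_le_mul_of_nonneg_left (hAx k) (div_pos hvk (hx k)).le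
    _ = c * |v k| := by simp only [t]; field_simp [(hx k).ne']

theorem abs_le_max_add_sqrt_of_rowSum_le (hA0 : ∀ i j, 0 ≤ A i j) (hA1 : ∀ i j, A i j ≤ 1)
    {H : Finset ι} {h d r : ℝ} (hh : 0 < h) (hd : 0 < d) (hH : (#H : ℝ) ≤ h)
    (hhub : ∀ i ∈ H, ∑ j, A i j ≤ d) (hrest : ∀ i ∉ H, ∑ j, A i j ≤ r)
    (hv : v ≠ 0) (heig : A *ᵥ v = lam • v) :
    |lam| ≤ max h r + √(h * d) := by
  classical
  set q := √(h * d)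
  have hq : 0 < q := Real.sqrt_pos.2 (mul_pos hh hd)
  -- weighting the hubs by `s = q / h` makes both kinds of rows give the bound `max h r + q`
  set s := q / h
  have hs : 0 < s := div_pos hq hh
  have hsh : s * h = q := div_mul_cancel₀ q hh.ne'
  have hsq : s * q = d := by
    rw [div_mul_eq_mul_div, ← sq, Real.sq_sqrt (mul_pos hh hd).le, mul_div_cancel_left₀ d hh.ne']
  set x : ι → ℝ := fun j => if j ∈ H then s else 1 with hx
  have hrow : ∀ i, (A *ᵥ x) i ≤ ∑ j, A i j + s * h := by
    intro i
    calc (A *ᵥ x) i ≤ ∑ j, (A i j + if j ∈ H then s else 0) := by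
          refine Finset.sum_le_sum fun j _ => ?_
          by_cases hj : j ∈ H
          · simp only [hx, hj, if_true]
            nlinarith [hA0 i j, hA1 i j]
          · simp [hx, hj]
      _ ≤ ∑ j, A i j + s * h := by
          rw [Finset.sum_add_distrib, Finset.sum_ite_mem, Finset.univ_inter, Finset.sum_const,
            nsmul_eq_mul, mul_comm]
          gcongr
  refine abs_le_of_mulVec_le_smul hA0 (x := x)
    (fun j => by by_cases hj : j ∈ H <;> simp [hx, hj, hs]) (fun i => ?_) hv heig
  by_cases hi : i ∈ H
  · calc (A *ᵥ x) i ≤ d + s * h := (hrow i).trans (by gcongr; exact hhub i hi)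
      _ = s * (h + q) := by rw [← hsq]; ring
      _ ≤ (max h r + q) * s := by nlinarith [le_max_left h r]
      _ = (max h r + q) * x i := by simp [hx, hi]
  · calc (A *ᵥ x) i ≤ r + s * h := (hrow i).trans (by gcongr; exact hrest i hi)
      _ ≤ max h r + q := by linarith [le_max_right h r]
      _ = (max h r + q) * x i := by simp [hx, hi]

end Matrix

theorem eigenvalue_le_of_degree_le {n ℓ : ℕ} {x : ℕ → ℕ → ℝ}
    (h01 : ∀ i j, x i j = 0 ∨ x i j = 1) {h d r : ℝ} (hh : 0 < h) (hd : 0 < d)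
    (hℓ : (ℓ : ℝ) ≤ h) (hhub : ∀ i ∈ Icc 1 n, i ≤ ℓ → ∑ j ∈ Icc 1 n, x i j ≤ d)
    (hrest : ∀ i ∈ Icc 1 n, ℓ < i → ∑ j ∈ Icc 1 n, x i j ≤ r) {lam : ℝ} {v : Fin n → ℝ}
    (hv : v ≠ 0) (heig : Matrix.of (fun i j : Fin n => x (i.1 + 1) (j.1 + 1)) *ᵥ v = lam • v) :
    lam ≤ max h r + √(h * d) := by
  have hrowSum (i : Fin n) :
      ∑ j : Fin n, x (i.1 + 1) (j.1 + 1) = ∑ j ∈ Icc 1 n, x (i.1 + 1) j := by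
    rw [Fin.sum_univ_eq_sum_range (fun j => x (i.1 + 1) (j + 1)), range_eq_Ico, sum_Ico_add',
      zero_add, Ico_add_one_right_eq_Icc]
  have hmem : ∀ i : Fin n, i.1 + 1 ∈ Icc 1 n := fun i => Finset.mem_Icc.2 ⟨by omega, i.2⟩
  have hentry : ∀ i j : Fin n, 0 ≤ x (i.1 + 1) (j.1 + 1) ∧ x (i.1 + 1) (j.1 + 1) ≤ 1 :=
    fun i j => by rcases h01 (i.1 + 1) (j.1 + 1) with h | h <;> simp [h]
  refine (le_abs_self lam).trans (Matrix.abs_le_max_add_sqrt_of_rowSum_le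
    (H := {i : Fin n | i.1 < ℓ}) (fun i j => (hentry i j).1) (fun i j => (hentry i j).2) hh hd ?_
    (fun i hi => ?_) (fun i hi => ?_) hv heig)
  · rw [Fin.card_filter_val_lt]
    exact le_trans (by exact_mod_cast min_le_right n ℓ) hℓ
  · rw [hrowSum]
    exact hhub _ (hmem i) (by simpa using hi)
  · rw [hrowSum]
    exact hrest _ (hmem i) (by simpa using hi)

theorem eigenvalue_le_two_rpow_of_degree_lt {n ℓ : ℕ} {w : ℕ → ℝ} {x : ℕ → ℕ → ℝ}
    (h01 : ∀ i j, x i j = 0 ∨ x i j = 1) {W δ h t L : ℝ} (hW : 1 ≤ W) (hδ : δ ≤ 1)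
    (hh : 0 < h) (hhW : h ≤ W ^ δ) (hhd : h * (3 * W) ≤ (W ^ δ) ^ 2) (ht : 0 ≤ t)
    (htL : 2 * t + 3/2 * L ≤ W ^ δ) (hℓ : (ℓ : ℝ) ≤ h) (hw : ∀ i ∈ Icc 1 n, w i ≤ W)
    (htail : ∀ i ∈ Icc 1 n, ℓ < i → w i ≤ t)
    (hdeg : ∀ i ∈ Icc 1 n, ∑ j ∈ Icc 1 n, x i j < 2 * w i + 3/2 * L) {lam : ℝ}
    {v : Fin n → ℝ} (hv : v ≠ 0)
    (heig : Matrix.of (fun i j : Fin n => x (i.1 + 1) (j.1 + 1)) *ᵥ v = lam • v) :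
    lam ≤ 2 * W ^ δ := by
  have hWδ : W ^ δ ≤ W := by simpa using Real.rpow_le_rpow_of_exponent_le hW hδ
  have hsqrt : √(h * (3 * W)) ≤ W ^ δ :=
    Real.sqrt_le_iff.2 ⟨Real.rpow_nonneg (by linarith) δ, hhd⟩
  have := eigenvalue_le_of_degree_le h01 hh (by positivity : 0 < 3 * W) hℓ (r := W ^ δ)
    (fun i hi _ => by linarith [hdeg i hi, hw i hi])
    (fun i hi hiℓ => by linarith [hdeg i hi, htail i hi hiℓ]) hv heig
  linarith [max_le hhW le_rfl]

theorem isLittleO_rpow_rpow_atTop {a b : ℝ} (hab : a < b) :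
    (fun x : ℝ => x ^ a) =o[atTop] fun x => x ^ b := by
  refine (isLittleO_iff_tendsto' ?_).2 ?_
  · filter_upwards [eventually_gt_atTop 0] with x hx h
    exact absurd h (Real.rpow_pos_of_pos hx b).ne'
  · refine (tendsto_rpow_neg_atTop (sub_pos.2 hab)).congr' ?_
    filter_upwards [eventually_gt_atTop 0] with x hx
    rw [neg_sub, Real.rpow_sub hx]

theorem isLittleO_rpow_add_const_add_log_atTop {a b c e p : ℝ} (hp0 : 0 < p) (hep : e < p) :
    (fun x => a * x ^ e + b + c * Real.log x) =o[atTop] fun x => x ^ p :=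
  (((isLittleO_rpow_rpow_atTop hep).const_mul_left a).add
    (isLittleO_const_left.2 (Or.inr (tendsto_norm_atTop_atTop.comp (tendsto_rpow_atTop hp0))))).add
    ((isLittleO_log_rpow_atTop hp0).const_mul_left c)

theorem eventually_le_rpow_of_isLittleO {f : ℝ → ℝ} {p : ℝ} (h : f =o[atTop] fun x => x ^ p) :
    ∀ᶠ x in atTop, f x ≤ x ^ p := by
  filter_upwards [h.eventuallyLE, eventually_ge_atTop 0] with x hx hx0
  rw [Real.norm_eq_abs, Real.norm_eq_abs, abs_of_nonneg (Real.rpow_nonneg hx0 p)] at hx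
  exact (le_abs_self _).trans hx

theorem eventually_heterogeneity_bounds {δ θ γ Γ₀ Γ₁ Γ₂ : ℝ} (hδ : 0 < δ) (hθ : θ < δ)
    (hθδ : θ + 1 < 2 * δ) (hγ : 1 - γ < δ) :
    ∀ᶠ W in atTop, 1 ≤ W ∧ Γ₀ * W ^ θ ≤ W ^ δ ∧ Γ₀ * W ^ θ * (3 * W) ≤ (W ^ δ) ^ 2 ∧
      2 * (Γ₂ * W ^ (1 - γ)) + 3/2 * (Γ₂ / Γ₁ * W ^ (1 - γ) + |Real.log Γ₀| + θ * Real.log W)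
        ≤ W ^ δ := by
  filter_upwards [eventually_ge_atTop 1,
    eventually_le_rpow_of_isLittleO ((isLittleO_rpow_rpow_atTop hθ).const_mul_left Γ₀),
    eventually_le_rpow_of_isLittleO ((isLittleO_rpow_rpow_atTop hθδ).const_mul_left (3 * Γ₀)),
    eventually_le_rpow_of_isLittleO (isLittleO_rpow_add_const_add_log_atTop
      (a := 2 * Γ₂ + 3/2 * (Γ₂ / Γ₁)) (b := 3/2 * |Real.log Γ₀|) (c := 3/2 * θ) hδ hγ)]
    with W hW hhub hprod hrest
  have hW0 : 0 < W := by linarith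
  refine ⟨hW, hhub, ?_, by linarith⟩
  calc Γ₀ * W ^ θ * (3 * W) = 3 * Γ₀ * W ^ (θ + 1) := by rw [Real.rpow_add_one hW0.ne']; ring
    _ ≤ W ^ (2 * δ) := hprod
    _ = (W ^ δ) ^ 2 := by rw [← Real.rpow_natCast, ← Real.rpow_mul hW0.le]; ring_nf

theorem tendsto_weight_atTop {w : ℕ → ℕ → ℝ} {ℓ : ℕ → ℕ} {θ β Γ₀ Γ₁ : ℝ} (hθ : 0 < θ)
    (hβ : 0 ≤ β) (hΓ₀ : 0 < Γ₀) (hΓ₁ : 0 < Γ₁) (hwpos : ∀ n, 1 ≤ n → 0 ≤ w n 1)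
    (hwmono : ∀ n i j : ℕ, 1 ≤ i → i ≤ j → j ≤ n → w n j ≤ w n i)
    (hH0 : ∀ n, 1 ≤ n → (ℓ n : ℝ) < Γ₀ * w n 1 ^ θ)
    (hH2 : ∀ n i, ℓ n < i → i ≤ n → Γ₁ * Real.log n ^ (1 + β) < w n i) :
    Tendsto (fun n => w n 1) atTop atTop := by
  have hlog : Tendsto (fun n : ℕ => Γ₁ * Real.log n ^ (1 + β)) atTop atTop :=
    ((tendsto_rpow_atTop (by linarith)).const_mul_atTop hΓ₁).comp
      (Real.tendsto_log_atTop.comp tendsto_natCast_atTop_atTop)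
  have hpow : Tendsto (fun n : ℕ => ((n : ℝ) / Γ₀) ^ (1 / θ)) atTop atTop :=
    (tendsto_rpow_atTop (by positivity)).comp (tendsto_natCast_atTop_atTop.atTop_div_const hΓ₀)
  refine tendsto_atTop.2 fun b => ?_
  filter_upwards [hlog.eventually_ge_atTop b, hpow.eventually_ge_atTop b, eventually_ge_atTop 1]
    with n hlogb hpowb hn
  rcases lt_or_ge (ℓ n) n with hℓ | hℓ
  · exact hlogb.trans ((hH2 n _ (Nat.lt_succ_self _) hℓ).le.trans
      (hwmono n 1 _ le_rfl (by omega) hℓ))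
  · have hnW : (n : ℝ) / Γ₀ ≤ w n 1 ^ θ :=
      (div_le_iff₀' hΓ₀).2 ((Nat.cast_le.2 hℓ).trans (hH0 n hn).le)
    calc b ≤ ((n : ℝ) / Γ₀) ^ (1 / θ) := hpowb
      _ ≤ (w n 1 ^ θ) ^ (1 / θ) := by gcongr
      _ = w n 1 := by rw [← Real.rpow_mul (hwpos n hn), mul_one_div_cancel hθ.ne', Real.rpow_one]

theorem log_le_of_heterogeneity {n ℓ : ℕ} {w : ℕ → ℝ} {θ γ β Γ₀ Γ₁ Γ₂ : ℝ} (hn : 3 ≤ n)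
    (hθ : 0 ≤ θ) (hβ : 0 ≤ β) (hΓ₀ : 0 < Γ₀) (hΓ₁ : 0 < Γ₁) (hΓ₂ : 0 ≤ Γ₂) (hW : 1 ≤ w 1)
    (hH0 : (ℓ : ℝ) < Γ₀ * w 1 ^ θ)
    (hH2 : ∀ i, ℓ < i → i ≤ n →
      Γ₁ * Real.log n ^ (1 + β) < w i ∧ w i < Γ₂ * w 1 ^ (1 - γ)) :
    Real.log n ≤ Γ₂ / Γ₁ * w 1 ^ (1 - γ) + |Real.log Γ₀| + θ * Real.log (w 1) := by
  have hlog1 : 1 ≤ Real.log n := by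
    rw [Real.le_log_iff_exp_le (by positivity)]
    have : (3 : ℝ) ≤ n := by exact_mod_cast hn
    linarith [Real.exp_one_lt_d9]
  have hW0 : 0 < w 1 := by linarith
  have htail : 0 ≤ Γ₂ / Γ₁ * w 1 ^ (1 - γ) := by positivity
  have hhub : 0 ≤ |Real.log Γ₀| + θ * Real.log (w 1) :=
    add_nonneg (abs_nonneg _) (mul_nonneg hθ (Real.log_nonneg hW))
  rcases lt_or_ge ℓ n with hℓ | hℓ
  · have h2 := hH2 (ℓ + 1) (Nat.lt_succ_self _) hℓ
    have : Γ₁ * Real.log n < Γ₂ * w 1 ^ (1 - γ) := by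
      have := Real.self_le_rpow_of_one_le hlog1 (show 1 ≤ 1 + β by linarith)
      nlinarith
    have : Real.log n ≤ Γ₂ / Γ₁ * w 1 ^ (1 - γ) := by
      rw [div_mul_eq_mul_div, le_div_iff₀ hΓ₁]; linarith
    linarith
  · have hn' : (n : ℝ) < Γ₀ * w 1 ^ θ := (Nat.cast_le.2 hℓ).trans_lt hH0
    have : Real.log n ≤ Real.log Γ₀ + θ * Real.log (w 1) := by
      rw [← Real.log_rpow hW0, ← Real.log_mul hΓ₀.ne' (Real.rpow_pos_of_pos hW0 θ).ne']
      exact Real.log_le_log (by positivity) hn'.le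
    linarith [le_abs_self (Real.log Γ₀)]

theorem stmt11_general (δ θ γ β Γ₀ Γ₁ Γ₂ : ℝ)
    (hδ1 : (3:ℝ)/4 ≤ δ) (hδ2 : δ < 3 - Real.sqrt 5)
    (hθpos : 0 < θ) (hθ : θ < δ / 2) (hγ : γ > 1 - δ / 2)
    (hβ : 0 < β) (hΓ₀ : 0 < Γ₀) (hΓ₁ : 0 < Γ₁) (hΓ₂ : 0 < Γ₂)
    (w : ℕ → ℕ → ℝ) (ℓ : ℕ → ℕ)
    (hwpos : ∀ n : ℕ, 1 ≤ n → ∀ i ∈ Icc 1 n, 0 < w n i)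
    (hwmono : ∀ n i j : ℕ, 1 ≤ i → i ≤ j → j ≤ n → w n j ≤ w n i)
    -- [H0] cardinality of hubs
    (hH0 : ∀ n : ℕ, 1 ≤ n → (ℓ n : ℝ) < Γ₀ * (w n 1) ^ θ)
    -- [H2] poorly connected nodes
    (hH2 : ∀ n i : ℕ, ℓ n < i → i ≤ n →
      Γ₁ * (Real.log (n : ℝ)) ^ ((1:ℝ) + β) < w n i ∧
      w n i < Γ₂ * (w n 1) ^ ((1:ℝ) - γ))
    -- the random graph model: independent Bernoulli edge indicators
    (Ω : ℕ → Type) [∀ n, MeasurableSpace (Ω n)]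
    (μ : ∀ n, Measure (Ω n))
    (X : ∀ n : ℕ, ℕ → ℕ → Ω n → ℝ)
    (hmeas : ∀ n i j, Measurable (X n i j))
    (hsymm : ∀ n i j, X n i j = X n j i)
    (hdiag : ∀ n i ω, X n i i ω = 0)
    (h01 : ∀ n i j ω, X n i j ω = 0 ∨ X n i j ω = 1)
    (hber : ∀ n, ∀ i ∈ Icc 1 n, ∀ j ∈ Icc 1 n, i ≠ j →
      μ n {ω | X n i j ω = 1} = ENNReal.ofReal (w n i * w n j / ∑ k ∈ Icc 1 n, w n k))
    (hindep : ∀ n, iIndepFun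
      (fun (p : {p : ℕ × ℕ // 1 ≤ p.1 ∧ p.1 < p.2 ∧ p.2 ≤ n}) ω =>
        X n p.val.1 p.val.2 ω) (μ n)) :
    ∃ N : ℕ, ∀ n > N,
      ENNReal.ofReal (1 - (n : ℝ) ^ (-(1/2 : ℝ))) ≤
        μ n {ω | ∀ (lam : ℝ) (v : Fin n → ℝ), v ≠ 0 →
          Matrix.mulVec (Matrix.of fun i j : Fin n => X n (i.1 + 1) (j.1 + 1) ω) v
            = lam • v →
          lam ≤ 5 * (w n 1) ^ δ} := by
  have hδ : δ ≤ 1 := by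
    have : (2 : ℝ) < √5 := (Real.lt_sqrt zero_le_two).2 (by norm_num)
    linarith
  have hW := tendsto_weight_atTop hθpos hβ.le hΓ₀ hΓ₁
    (fun n hn => (hwpos n hn 1 (by simp [hn])).le) hwmono hH0 fun n i h1 h2 => (hH2 n i h1 h2).1
  obtain ⟨N, hN⟩ := eventually_atTop.1 ((eventually_ge_atTop 3).and (hW.eventually
    (eventually_heterogeneity_bounds (δ := δ) (θ := θ) (γ := γ) (Γ₀ := Γ₀) (Γ₁ := Γ₁) (Γ₂ := Γ₂)
      (by linarith) (by linarith) (by linarith) (by linarith))))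
  refine ⟨N, fun n hn => ?_⟩
  obtain ⟨hn3, hW1, hhubs, hprod, hrest⟩ := hN n hn.le
  have hn1 : 1 ≤ n := by omega
  have hlog := log_le_of_heterogeneity hn3 hθpos.le hβ.le hΓ₀ hΓ₁ hΓ₂.le hW1 (hH0 n hn1) (hH2 n)
  refine (ofReal_one_sub_le_measure_degree_lt (fun i hi => (hwpos n hn1 i hi).le) (hmeas n)
    (hsymm n) (hdiag n) (h01 n) (hber n) (hindep n)).trans
    (measure_mono fun ω hω lam v hv heig => ?_)
  have := eigenvalue_le_two_rpow_of_degree_lt (fun i j => h01 n i j ω) hW1 hδ (by positivity)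
    hhubs hprod (by positivity) (by linarith) (hH0 n hn1).le
    (fun i hi => hwmono n 1 i le_rfl (mem_Icc.1 hi).1 (mem_Icc.1 hi).2)
    (fun i hi hiℓ => (hH2 n i hiℓ (mem_Icc.1 hi).2).2.le) hω hv heig
  linarith [Real.rpow_nonneg (zero_le_one.trans hW1) δ]

/-- under the strong heterogeneity hypotheses with `θ < δ/2` and
`γ > 1 − δ/2` for some `δ ∈ [3/4, 3−√5)`, for all sufficiently large `n`, with
probability at least `1 − n^{−1/2}`, every eigenvalue of the adjacency matrix of a
random graph in `G_{ℓ,θ,γ}(w)` is at most `5(max_k w_k)^δ`. -/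
theorem stmt11 (δ θ γ β Γ₀ Γ₁ Γ₂ : ℝ)
    (hδ1 : (3:ℝ)/4 ≤ δ) (hδ2 : δ < 3 - Real.sqrt 5)
    (hθpos : 0 < θ) (hθ : θ < δ / 2) (hγ : γ > 1 - δ / 2) (hγ1 : γ < 1)
    (hβ : 0 < β) (hΓ₀ : 0 < Γ₀) (hΓ₁ : 0 < Γ₁) (hΓ₂ : 0 < Γ₂)
    (w : ℕ → ℕ → ℝ) (ℓ : ℕ → ℕ) (hℓmono : Monotone ℓ)
    (hℓ : ∀ n : ℕ, 1 ≤ n → 1 ≤ ℓ n ∧ ℓ n ≤ n)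
    (hwpos : ∀ n : ℕ, 1 ≤ n → ∀ i ∈ Icc 1 n, 0 < w n i)
    (hwmono : ∀ n i j : ℕ, 1 ≤ i → i ≤ j → j ≤ n → w n j ≤ w n i)
    (hadm : ∀ n : ℕ, 1 ≤ n → (w n 1) ^ 2 ≤ ∑ k ∈ Icc 1 n, w n k)
    -- [H0] cardinality of hubs
    (hH0 : ∀ n : ℕ, 1 ≤ n → (ℓ n : ℝ) < Γ₀ * (w n 1) ^ θ)
    -- [H2] poorly connected nodes
    (hH2 : ∀ n i : ℕ, ℓ n < i → i ≤ n →
      Γ₁ * (Real.log (n : ℝ)) ^ ((1:ℝ) + β) < w n i ∧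
      w n i < Γ₂ * (w n 1) ^ ((1:ℝ) - γ))
    -- the random graph model: independent Bernoulli edge indicators
    (Ω : ℕ → Type) [∀ n, MeasurableSpace (Ω n)]
    (μ : ∀ n, Measure (Ω n)) [∀ n, IsProbabilityMeasure (μ n)]
    (X : ∀ n : ℕ, ℕ → ℕ → Ω n → ℝ)
    (hmeas : ∀ n i j, Measurable (X n i j))
    (hsymm : ∀ n i j, X n i j = X n j i)
    (hdiag : ∀ n i ω, X n i i ω = 0)
    (h01 : ∀ n i j ω, X n i j ω = 0 ∨ X n i j ω = 1)
    (hber : ∀ n, ∀ i ∈ Icc 1 n, ∀ j ∈ Icc 1 n, i ≠ j →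
      μ n {ω | X n i j ω = 1} = ENNReal.ofReal (w n i * w n j / ∑ k ∈ Icc 1 n, w n k))
    (hindep : ∀ n, iIndepFun
      (fun (p : {p : ℕ × ℕ // 1 ≤ p.1 ∧ p.1 < p.2 ∧ p.2 ≤ n}) ω =>
        X n p.val.1 p.val.2 ω) (μ n)) :
    ∃ N : ℕ, ∀ n > N,
      ENNReal.ofReal (1 - (n : ℝ) ^ (-(1/2 : ℝ))) ≤
        μ n {ω | ∀ (lam : ℝ) (v : Fin n → ℝ), v ≠ 0 →
          Matrix.mulVec (Matrix.of fun i j : Fin n => X n (i.1 + 1) (j.1 + 1) ω) v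
            = lam • v →
          lam ≤ 5 * (w n 1) ^ δ} :=
  stmt11_general δ θ γ β Γ₀ Γ₁ Γ₂ hδ1 hδ2 hθpos hθ hγ hβ hΓ₀ hΓ₁ hΓ₂ w ℓ hwpos hwmono hH0 hH2 Ω μ X
    hmeas hsymm hdiag h01 hber hindep
end
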